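/- arXiv:2208.08571 — 2 statements merged into one kernel-verified Lean document; each statement's English description precedes it below -/
import Mathlib

section
/- For every integer N ≥ 1, the S-matrix of the Z_N toric code is unitary: S · Sᴴ = 1, where Sᴴ is the conjugate transpose of the G×G matrix S. -/
/-- Anyon labels of the Z_N toric code: the group ZMod N × ZMod N. -/
abbrev TCAnyon (N : ℕ) := ZMod N × ZMod N

/-- Topological twist θ(p,q) = exp(2πi·p̃·q̃/N) of the Z_N toric code. -/
noncomputable def tcTwist (N : ℕ) (a : TCAnyon N) : ℂ :=
  Complex.exp (2 * Real.pi * Complex.I * (a.1.val * a.2.val) / N)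

/-- S-matrix of the Z_N toric code:
S((p₁,q₁),(p₂,q₂)) = (1/N)·exp(2πi·(p̃₁·q̃₂ + p̃₂·q̃₁)/N). -/
noncomputable def tcS (N : ℕ) : Matrix (TCAnyon N) (TCAnyon N) ℂ :=
  fun a b => (1 / N) *
    Complex.exp (2 * Real.pi * Complex.I * (a.1.val * b.2.val + b.1.val * a.2.val) / N)

/-- T-matrix of the Z_N toric code: diagonal matrix of twists. -/
noncomputable def tcT (N : ℕ) : Matrix (TCAnyon N) (TCAnyon N) ℂ :=
  Matrix.diagonal (tcTwist N)

/-!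
Up to the factor `1/N`, the S-matrix is the character table `ψ(⟨a, b⟩)` of the hyperbolic
symmetric form `⟨a, b⟩ = a₁b₂ + b₁a₂` on `(ZMod N)²`, where `ψ` is the standard additive
character. Since `ψ(⟨a, c⟩) · conj ψ(⟨b, c⟩) = ψ(⟨a - b, c⟩)`, the `(a, b)` entry of `S Sᴴ` is a
product of two character sums over `ZMod N`, each equal to `N` or `0` by primitivity of `ψ`.
-/

open Matrix

section HyperbolicCharMatrix

variable {R : Type*} [CommRing R] [Fintype R] [DecidableEq R]

def hyperbolicCharMatrix (ψ : AddChar R ℂ) : Matrix (R × R) (R × R) ℂ :=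
  fun a b => ψ (a.1 * b.2 + b.1 * a.2)

lemma hyperbolicCharMatrix_mul_conjTranspose {ψ : AddChar R ℂ} (hψ : ψ.IsPrimitive) :
    hyperbolicCharMatrix ψ * (hyperbolicCharMatrix ψ)ᴴ = ((Fintype.card R : ℂ) ^ 2) • 1 := by
  ext a b
  have entry (c : R × R) : hyperbolicCharMatrix ψ a c * star (hyperbolicCharMatrix ψ b c)
      = ψ (c.1 * (a.2 - b.2)) * ψ (c.2 * (a.1 - b.1)) := by
    rw [hyperbolicCharMatrix, hyperbolicCharMatrix, Complex.star_def,
      ← AddChar.map_neg_eq_conj, ← AddChar.map_add_eq_mul, ← AddChar.map_add_eq_mul]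
    ring_nf
  simp only [mul_apply, conjTranspose_apply, entry, Fintype.sum_prod_type, ← Finset.mul_sum,
    ← Finset.sum_mul, AddChar.sum_mulShift _ hψ, sub_eq_zero, Matrix.smul_apply, one_apply,
    Prod.ext_iff]
  by_cases h₁ : a.1 = b.1 <;> by_cases h₂ : a.2 = b.2 <;> simp [h₁, h₂, sq]

end HyperbolicCharMatrix

lemma tcS_eq_smul_hyperbolicCharMatrix (N : ℕ) [NeZero N] :
    tcS N = (N : ℂ)⁻¹ • hyperbolicCharMatrix ZMod.stdAddChar := by
  ext a b
  have hcast : a.1 * b.2 + b.1 * a.2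
      = ((a.1.val * b.2.val + b.1.val * a.2.val : ℤ) : ZMod N) := by
    push_cast [ZMod.natCast_zmod_val]
    rfl
  rw [Matrix.smul_apply, hyperbolicCharMatrix, hcast, ZMod.stdAddChar_coe, tcS, smul_eq_mul,
    one_div]
  push_cast
  rfl

/-- for every N ≥ 1, the S-matrix of the Z_N toric code is
unitary: S · Sᴴ = 1. -/
theorem tcS_unitary (N : ℕ) [NeZero N] :
    tcS N * (tcS N)ᴴ = 1 := by
  have hN : (N : ℂ) ≠ 0 := NeZero.ne _
  rw [tcS_eq_smul_hyperbolicCharMatrix, conjTranspose_smul, smul_mul_smul_comm,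
    hyperbolicCharMatrix_mul_conjTranspose (ZMod.isPrimitive_stdAddChar N), ZMod.card, smul_smul]
  have hscalar : (N : ℂ)⁻¹ * star (N : ℂ)⁻¹ * (N : ℂ) ^ 2 = 1 := by
    rw [star_inv₀, Complex.star_def, Complex.conj_natCast]
    field_simp
  rw [hscalar, one_smul]
end

section
/- Let (G, b, θ) be the anyon data of an abelian topological order and K ≤ G a condensable (isotropic) subgroup. Then |K^⊥| · |K| = |G|, and the braiding induced on the condensed theory is again nondegenerate: if a ∈ K^⊥ satisfies b(a,x) = 1 for all x ∈ K^⊥, then a ∈ K. (This is the abelian case of the theorem that the local modules over a condensable algebra in a modular tensor category again form a modular tensor category.) -/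
private lemma addMonoidHom_equiv_self (H : Type*) [AddCommGroup H] [Finite H] :
    Nonempty ((H →+ Additive ℂˣ) ≃ H) := by
  have h0 : Monoid.exponent (Multiplicative H) ≠ 0 := Monoid.exponent_ne_zero_of_finite
  have : NeZero ((Monoid.exponent (Multiplicative H) : ℂ)) := ⟨by exact_mod_cast h0⟩
  obtain ⟨e⟩ := CommGroup.monoidHom_mulEquiv_of_hasEnoughRootsOfUnity (Multiplicative H) ℂ
  exact ⟨AddMonoidHom.toMultiplicativeLeft.trans e.toEquiv⟩

private lemma b_zero_left {G : Type*} [AddCommGroup G] (b : G → G → ℂˣ)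
    (hb_add : ∀ a a' c : G, b (a + a') c = b a c * b a' c) (c : G) : b 0 c = 1 := by
  have h := hb_add 0 0 c
  rw [add_zero] at h
  exact (mul_eq_left.mp h.symm)

private lemma b_zero_right {G : Type*} [AddCommGroup G] (b : G → G → ℂˣ)
    (hb_add : ∀ a a' c : G, b (a + a') c = b a c * b a' c)
    (hb_symm : ∀ a c : G, b a c = b c a) (a : G) : b a 0 = 1 := by
  rw [hb_symm]; exact b_zero_left b hb_add a

private lemma b_neg_left {G : Type*} [AddCommGroup G] (b : G → G → ℂˣ)
    (hb_add : ∀ a a' c : G, b (a + a') c = b a c * b a' c) (a c : G) :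
    b (-a) c = (b a c)⁻¹ := by
  have h := hb_add a (-a) c
  rw [add_neg_cancel, b_zero_left b hb_add] at h
  exact eq_inv_of_mul_eq_one_right h.symm

/-- the bicharacter as a homomorphism into the character group -/
private def bhom {G : Type*} [AddCommGroup G] (b : G → G → ℂˣ)
    (hb_add : ∀ a a' c : G, b (a + a') c = b a c * b a' c)
    (hb_symm : ∀ a c : G, b a c = b c a) : G →+ (G →+ Additive ℂˣ) where
  toFun a :=
    { toFun := fun c => Additive.ofMul (b a c)
      map_zero' := by simp [b_zero_right b hb_add hb_symm a]
      map_add' := fun x y => by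
        simp only [← ofMul_mul]
        congr 1
        rw [hb_symm a (x + y), hb_add, hb_symm x a, hb_symm y a] }
  map_zero' := by ext c; simp [b_zero_left b hb_add c]
  map_add' := fun x y => by ext c; simp [hb_add x y c]

private lemma bhom_apply {G : Type*} [AddCommGroup G] (b : G → G → ℂˣ)
    (hb_add : ∀ a a' c : G, b (a + a') c = b a c * b a' c)
    (hb_symm : ∀ a c : G, b a c = b c a) (a c : G) :
    bhom b hb_add hb_symm a c = Additive.ofMul (b a c) := rfl

/-- the orthogonal complement -/
private def perp {G : Type*} [AddCommGroup G] (b : G → G → ℂˣ)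
    (hb_add : ∀ a a' c : G, b (a + a') c = b a c * b a' c)
    (K : AddSubgroup G) : AddSubgroup G where
  carrier := {a : G | ∀ k ∈ K, b a k = 1}
  zero_mem' := fun k _ => b_zero_left b hb_add k
  add_mem' := fun {x y} hx hy k hk => by rw [hb_add, hx k hk, hy k hk, one_mul]
  neg_mem' := fun {x} hx k hk => by rw [b_neg_left b hb_add, hx k hk, inv_one]

private lemma card_quot_eq {G : Type*} [AddCommGroup G] [Fintype G] (b : G → G → ℂˣ)
    (hb_add : ∀ a a' c : G, b (a + a') c = b a c * b a' c)
    (hb_symm : ∀ a c : G, b a c = b c a)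
    (hb_nondeg : ∀ a : G, (∀ c : G, b a c = 1) → a = 0)
    (K : AddSubgroup G) :
    Nat.card (G ⧸ perp b hb_add K) = Nat.card K := by
  set P := perp b hb_add K with hP
  have hfK : ∀ k : K, ∀ a ∈ P, bhom b hb_add hb_symm (k : G) a = 0 := by
    intro k a ha
    have : b (k : G) a = 1 := by rw [hb_symm]; exact ha k k.2
    simp [bhom_apply, this]
  let f : K → ((G ⧸ P) →+ Additive ℂˣ) :=
    fun k => QuotientAddGroup.lift P (bhom b hb_add hb_symm (k : G)) (hfK k)
  have hf : Function.Injective f := by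
    intro k₁ k₂ h
    have h' : ∀ c : G, b (k₁ : G) c = b (k₂ : G) c := by
      intro c
      have := congrArg (fun φ => φ (QuotientAddGroup.mk c)) h
      exact this
    have : ((k₁ : G) + -(k₂ : G)) = 0 := by
      apply hb_nondeg
      intro c
      rw [hb_add, b_neg_left b hb_add, h' c, mul_inv_cancel]
    have : (k₁ : G) = (k₂ : G) := by rwa [add_neg_eq_zero] at this
    exact Subtype.ext this
  let Ψ : G →+ (K →+ Additive ℂˣ) :=
    (AddMonoidHom.compHom' K.subtype).comp (bhom b hb_add hb_symm)
  have hΨ : ∀ a ∈ P, Ψ a = 0 := by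
    intro a ha
    ext k
    simpa [Ψ, AddMonoidHom.compHom', bhom_apply] using ha k k.2
  let g : (G ⧸ P) →+ (K →+ Additive ℂˣ) := QuotientAddGroup.lift P Ψ hΨ
  have hg : Function.Injective g := by
    rw [injective_iff_map_eq_zero]
    intro q hq
    induction q using QuotientAddGroup.induction_on with
    | H a =>
      rw [QuotientAddGroup.eq_zero_iff]
      intro k hk
      have := congrArg (fun φ => φ (⟨k, hk⟩ : K)) hq
      simpa [g, Ψ, AddMonoidHom.compHom', bhom_apply] using this
  obtain ⟨e₁⟩ := addMonoidHom_equiv_self (G ⧸ P)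
  obtain ⟨e₂⟩ := addMonoidHom_equiv_self K
  have hfin₁ : Finite ((G ⧸ P) →+ Additive ℂˣ) := Finite.of_equiv _ e₁.symm
  have hfin₂ : Finite (K →+ Additive ℂˣ) := Finite.of_equiv _ e₂.symm
  have h₁ : Nat.card K ≤ Nat.card (G ⧸ P) := by
    calc Nat.card K ≤ Nat.card ((G ⧸ P) →+ Additive ℂˣ) :=
          Nat.card_le_card_of_injective f hf
      _ = Nat.card (G ⧸ P) := Nat.card_congr e₁
  have h₂ : Nat.card (G ⧸ P) ≤ Nat.card K := by
    calc Nat.card (G ⧸ P) ≤ Nat.card (K →+ Additive ℂˣ) :=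
          Nat.card_le_card_of_injective g hg
      _ = Nat.card K := Nat.card_congr e₂
  omega

private lemma perp_mul_card {G : Type*} [AddCommGroup G] [Fintype G] (b : G → G → ℂˣ)
    (hb_add : ∀ a a' c : G, b (a + a') c = b a c * b a' c)
    (hb_symm : ∀ a c : G, b a c = b c a)
    (hb_nondeg : ∀ a : G, (∀ c : G, b a c = 1) → a = 0)
    (K : AddSubgroup G) :
    Nat.card (perp b hb_add K) * Nat.card K = Nat.card G := by
  rw [← card_quot_eq b hb_add hb_symm hb_nondeg K,
    AddSubgroup.card_eq_card_quotient_mul_card_addSubgroup (perp b hb_add K), mul_comm]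

/-- let (G, b, θ) be the anyon data of an abelian topological
order and K ≤ G a condensable (isotropic) subgroup, with centralizer
K^⊥ = {a : ∀ k ∈ K, b a k = 1}. Then |K^⊥| · |K| = |G|, and the braiding
induced on the condensed theory is again nondegenerate: if a ∈ K^⊥ satisfies
b(a,x) = 1 for all x ∈ K^⊥, then a ∈ K. (Abelian case of: local modules over
a condensable algebra in a modular tensor category form a modular category.) -/
theorem condensed_theory_modular
    {G : Type*} [AddCommGroup G] [Fintype G]
    (b : G → G → ℂˣ)
    (hb_add : ∀ a a' c : G, b (a + a') c = b a c * b a' c)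
    (hb_symm : ∀ a c : G, b a c = b c a)
    (hb_nondeg : ∀ a : G, (∀ c : G, b a c = 1) → a = 0)
    (θ : G → ℂˣ)
    (hθ0 : θ 0 = 1)
    (hθ : ∀ a c : G, θ (a + c) = θ a * θ c * b a c)
    (K : AddSubgroup G)
    (hK : ∀ k ∈ K, θ k = 1) :
    Nat.card {a : G | ∀ k ∈ K, b a k = 1} * Nat.card K = Nat.card G ∧
    (∀ a ∈ {a : G | ∀ k ∈ K, b a k = 1},
      (∀ x ∈ {a : G | ∀ k ∈ K, b a k = 1}, b a x = 1) → a ∈ K) := by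
  set P := perp b hb_add K with hPdef
  have hset : {a : G | ∀ k ∈ K, b a k = 1} = (P : Set G) := rfl
  constructor
  · rw [hset]
    exact perp_mul_card b hb_add hb_symm hb_nondeg K
  · intro a ha h
    rw [hset] at ha h
    have haP : a ∈ perp b hb_add P := h
    have hKP : (K : Set G) ⊆ ((perp b hb_add P : AddSubgroup G) : Set G) := by
      intro k hk x hx
      rw [hb_symm]
      exact hx k hk
    have h1 := perp_mul_card b hb_add hb_symm hb_nondeg K
    have h2 := perp_mul_card b hb_add hb_symm hb_nondeg P
    have hPpos : 0 < Nat.card P := Nat.card_pos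
    have hcard : Nat.card (perp b hb_add P) = Nat.card K := by
      have : Nat.card (perp b hb_add P) * Nat.card P
          = Nat.card K * Nat.card P := by rw [h2, ← h1, mul_comm]
      exact Nat.eq_of_mul_eq_mul_right hPpos this
    have hsets : (K : Set G) = ((perp b hb_add P : AddSubgroup G) : Set G) := by
      apply Set.eq_of_subset_of_ncard_le hKP
      rw [← Nat.card_coe_set_eq, ← Nat.card_coe_set_eq]
      · exact le_of_eq hcard
    show a ∈ (K : Set G)
    rw [hsets]
    exact haP
end
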